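/- arXiv:1907.11878 — 2 statements merged into one kernel-verified Lean document; each statement's English description precedes it below -/
import Mathlib

section
/- For real numbers λ₁,λ₂,λ₃, the two 4×4 matrices I₂ ⊗ I₂ + λ₁·σ₁⊗σ₁ + λ₂·σ₂⊗σ₂ + λ₃·σ₃⊗σ₃ and I₂ ⊗ I₂ + λ₁·σ₁⊗σ₁ − λ₂·σ₂⊗σ₂ + λ₃·σ₃⊗σ₃ are both positive semidefinite if and only if |λ₁| + |λ₂| + |λ₃| ≤ 1. -/
open Matrix Kronecker
open scoped ComplexOrder

/-!
Each `σᵢ ⊗ σᵢ` is diagonal in the Bell basis, with eigenvalues `±1` whose signs multiply to `-1`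
on every Bell state. Hence `1 + ∑ lᵢ σᵢ ⊗ σᵢ` has eigenvalues `1 + ε₁l₁ + ε₂l₂ + ε₃l₃` over the four
sign patterns with `ε₁ε₂ε₃ = -1`; replacing `l₂` by `-l₂` supplies the other four, and all eight
are nonnegative exactly when `|l₁| + |l₂| + |l₃| ≤ 1`.
-/

/-- The Pauli matrix σ₁. -/
def sigma1 : Matrix (Fin 2) (Fin 2) ℂ := !![0, 1; 1, 0]

/-- The Pauli matrix σ₂. -/
def sigma2 : Matrix (Fin 2) (Fin 2) ℂ := !![0, -Complex.I; Complex.I, 0]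

/-- The Pauli matrix σ₃. -/
def sigma3 : Matrix (Fin 2) (Fin 2) ℂ := !![1, 0; 0, -1]

namespace Matrix

variable {ι n R : Type*} [Fintype ι] [Fintype n]

theorem sum_smul_vecMulVec_mulVec_of_pairwise_orthogonal [CommRing R] [StarRing R]
    (c : ι → R) (v : ι → n → R) (hv : Pairwise fun i j => star (v i) ⬝ᵥ v j = 0) (j : ι) :
    (∑ i, c i • vecMulVec (v i) (star (v i))) *ᵥ v j = (c j * (star (v j) ⬝ᵥ v j)) • v j := by
  classical
  rw [sum_mulVec, Finset.sum_eq_single j]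
  · rw [smul_mulVec, vecMulVec_mulVec, op_smul_eq_smul, smul_smul]
  · intro i _ hij
    rw [smul_mulVec, vecMulVec_mulVec, hv hij]
    simp
  · simp

variable {𝕜 : Type*} [RCLike 𝕜]

theorem posSemidef_sum_smul_vecMulVec_iff (a : ι → ℝ) (v : ι → n → 𝕜) (hv0 : ∀ i, v i ≠ 0)
    (hv : Pairwise fun i j => star (v i) ⬝ᵥ v j = 0) :
    (∑ i, (a i : 𝕜) • vecMulVec (v i) (star (v i))).PosSemidef ↔ ∀ i, 0 ≤ a i := by
  refine ⟨fun hA j => ?_, fun ha => posSemidef_sum _ fun i _ =>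
    (posSemidef_vecMulVec_self_star (v i)).smul (RCLike.ofReal_nonneg.mpr (ha i))⟩
  obtain ⟨r, hr, hrv⟩ := RCLike.pos_iff_exists_ofReal.mp (dotProduct_star_self_pos_iff.mpr (hv0 j))
  have hquad := hA.dotProduct_mulVec_nonneg (v j)
  rw [sum_smul_vecMulVec_mulVec_of_pairwise_orthogonal _ _ hv, dotProduct_smul, smul_eq_mul,
    ← hrv, ← RCLike.ofReal_mul, ← RCLike.ofReal_mul, RCLike.ofReal_nonneg, mul_assoc] at hquad
  exact nonneg_of_mul_nonneg_left hquad (mul_pos hr hr)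

end Matrix

def bellDiagonal (l1 l2 l3 : ℝ) : Matrix (Fin 2 × Fin 2) (Fin 2 × Fin 2) ℂ :=
  (1 : Matrix (Fin 2) (Fin 2) ℂ) ⊗ₖ (1 : Matrix (Fin 2) (Fin 2) ℂ) +
    (l1 : ℂ) • (sigma1 ⊗ₖ sigma1) + (l2 : ℂ) • (sigma2 ⊗ₖ sigma2) +
    (l3 : ℂ) • (sigma3 ⊗ₖ sigma3)

/-- Vectorizations of `1, σ₃, σ₁, iσ₂`: the four Bell states, each of squared norm `2`. -/
def bellVec (k : Fin 4) : Fin 2 × Fin 2 → ℂ :=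
  fun p => ![1, sigma3, sigma1, Complex.I • sigma2] k p.1 p.2

def bellEigenvalue (l1 l2 l3 : ℝ) : Fin 4 → ℝ :=
  ![1 + l1 - l2 + l3, 1 - l1 + l2 + l3, 1 + l1 + l2 - l3, 1 - l1 - l2 - l3]

theorem star_bellVec_dotProduct_bellVec (i j : Fin 4) :
    star (bellVec i) ⬝ᵥ bellVec j = if i = j then 2 else 0 := by
  fin_cases i <;> fin_cases j <;>
    simp [bellVec, dotProduct, Fintype.sum_prod_type, sigma1, sigma2, sigma3, one_add_one_eq_two]

theorem bellDiagonal_eq_sum (l1 l2 l3 : ℝ) :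
    bellDiagonal l1 l2 l3 = ∑ k, ((bellEigenvalue l1 l2 l3 k / 2 : ℝ) : ℂ) •
      vecMulVec (bellVec k) (star (bellVec k)) := by
  ext ⟨i1, i2⟩ ⟨j1, j2⟩
  fin_cases i1 <;> fin_cases i2 <;> fin_cases j1 <;> fin_cases j2 <;>
    simp [bellDiagonal, bellVec, bellEigenvalue, Fin.sum_univ_four, sigma1, sigma2, sigma3,
      vecMulVec_apply, one_apply] <;> ring

theorem posSemidef_bellDiagonal_iff (l1 l2 l3 : ℝ) :
    (bellDiagonal l1 l2 l3).PosSemidef ↔ ∀ k, 0 ≤ bellEigenvalue l1 l2 l3 k := by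
  have hne (k : Fin 4) : bellVec k ≠ 0 := fun h => by
    simpa [h] using star_bellVec_dotProduct_bellVec k k
  have horth : Pairwise fun i j => star (bellVec i) ⬝ᵥ bellVec j = 0 := fun i j hij => by
    simp [star_bellVec_dotProduct_bellVec, hij]
  rw [bellDiagonal_eq_sum, ← RCLike.ofReal_eq_complex_ofReal,
    posSemidef_sum_smul_vecMulVec_iff _ _ hne horth]
  exact forall_congr' fun _ => by rw [le_div_iff₀ two_pos, zero_mul]

theorem bellEigenvalue_nonneg_iff (a b c : ℝ) :
    ((∀ k, 0 ≤ bellEigenvalue a b c k) ∧ ∀ k, 0 ≤ bellEigenvalue a (-b) c k) ↔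
      |a| + |b| + |c| ≤ 1 := by
  simp only [Fin.forall_fin_succ, IsEmpty.forall_iff, bellEigenvalue, cons_val_zero,
    cons_val_succ, and_true]
  constructor
  · rintro ⟨⟨h1, h2, h3, h4⟩, h5, h6, h7, h8⟩
    rcases abs_cases a with ⟨ha, -⟩ | ⟨ha, -⟩ <;> rcases abs_cases b with ⟨hb, -⟩ | ⟨hb, -⟩ <;>
      rcases abs_cases c with ⟨hc, -⟩ | ⟨hc, -⟩ <;> linarith
  · intro h
    refine ⟨⟨?_, ?_, ?_, ?_⟩, ?_, ?_, ?_, ?_⟩ <;>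
      linarith [le_abs_self a, neg_abs_le a, le_abs_self b, neg_abs_le b, le_abs_self c,
        neg_abs_le c]

theorem qubit_ppt_iff (l1 l2 l3 : ℝ) :
    (((1 : Matrix (Fin 2) (Fin 2) ℂ) ⊗ₖ (1 : Matrix (Fin 2) (Fin 2) ℂ) +
        (l1 : ℂ) • (sigma1 ⊗ₖ sigma1) + (l2 : ℂ) • (sigma2 ⊗ₖ sigma2) +
        (l3 : ℂ) • (sigma3 ⊗ₖ sigma3)).PosSemidef ∧
      ((1 : Matrix (Fin 2) (Fin 2) ℂ) ⊗ₖ (1 : Matrix (Fin 2) (Fin 2) ℂ) +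
        (l1 : ℂ) • (sigma1 ⊗ₖ sigma1) - (l2 : ℂ) • (sigma2 ⊗ₖ sigma2) +
        (l3 : ℂ) • (sigma3 ⊗ₖ sigma3)).PosSemidef) ↔
    |l1| + |l2| + |l3| ≤ 1 := by
  have hflip : (1 : Matrix (Fin 2) (Fin 2) ℂ) ⊗ₖ (1 : Matrix (Fin 2) (Fin 2) ℂ) +
      (l1 : ℂ) • (sigma1 ⊗ₖ sigma1) - (l2 : ℂ) • (sigma2 ⊗ₖ sigma2) +
      (l3 : ℂ) • (sigma3 ⊗ₖ sigma3) = bellDiagonal l1 (-l2) l3 := by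
    rw [bellDiagonal, Complex.ofReal_neg, neg_smul, ← sub_eq_add_neg]
  rw [hflip, ← bellDiagonal, posSemidef_bellDiagonal_iff, posSemidef_bellDiagonal_iff]
  exact bellEigenvalue_nonneg_iff l1 l2 l3
end

section
/- Suppose additionally that J₁ᵀ = J₁, J₂ᵀ = −J₂, J₃ᵀ = J₃. If some linear map L on matrices indexed by Fin n × Fin n satisfying L(A ⊗ B) = Φ(A) ⊗ Φ(B) for all A, B ∈ Mₙ(ℂ) maps positive semidefinite matrices to positive semidefinite matrices (i.e., Φ is 2-tensor-stable positive), then the matrix Iₙ ⊗ Iₙ + (3/(j(j+1)))·(λ₁²·J₁⊗J₁ − λ₂²·J₂⊗J₂ + λ₃²·J₃⊗J₃) is positive semidefinite (i.e., the Choi matrix of Φ∘Φ is positive semidefinite, so Φ∘Φ is completely positive). -/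
open Matrix Kronecker
open scoped ComplexOrder

/-- The spin value `j = (n-1)/2` for an `n`-dimensional system. -/
noncomputable def spinJ (n : ℕ) : ℝ := ((n : ℝ) - 1) / 2

/-- The spin polarization-scaling map
`Φ(X) = (1/n)·tr(X)·Iₙ + (3/(j(j+1)n))·Σᵢ λᵢ·tr(X Jᵢ)·Jᵢ`. -/
noncomputable def Phi (n : ℕ) (J : Fin 3 → Matrix (Fin n) (Fin n) ℂ) (lam : Fin 3 → ℝ)
    (X : Matrix (Fin n) (Fin n) ℂ) : Matrix (Fin n) (Fin n) ℂ :=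
  ((1 / (n : ℝ) : ℝ) : ℂ) • X.trace • (1 : Matrix (Fin n) (Fin n) ℂ) +
    ((3 / (spinJ n * (spinJ n + 1) * n) : ℝ) : ℂ) •
      ∑ i : Fin 3, (lam i : ℂ) • (X * J i).trace • J i

/-!
Positivity of `L` on the positive semidefinite matrix `Ω = ∑_{a,b} E_ab ⊗ E_ab` shows that
`L Ω = ∑_{a,b} Φ(E_ab) ⊗ Φ(E_ab)` is positive semidefinite. Writing `Φ(X) = ∑_k tr(X A_k) B_k`
with `A = (1, J₁, J₂, J₃)`, this sum is `∑_{k,l} tr(A_kᵀ A_l) B_k ⊗ B_l`. The trace conditions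
make the Gram matrix `tr(A_kᵀ A_l)` diagonal, the transposition sign of `J₂` produces the minus
sign in front of `J₂ ⊗ J₂`, and what remains is `1/n` times the matrix of the theorem.
-/

namespace Matrix

section Kronecker

variable {R ι κ κ' l m n p : Type*} [CommSemiring R]

theorem sum_kronecker (s : Finset ι) (A : ι → Matrix l m R) (B : Matrix n p R) :
    (∑ i ∈ s, A i) ⊗ₖ B = ∑ i ∈ s, A i ⊗ₖ B :=
  map_sum ((kroneckerBilinear (R := R)).flip B) A s

theorem kronecker_sum (s : Finset ι) (A : Matrix l m R) (B : ι → Matrix n p R) :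
    A ⊗ₖ (∑ i ∈ s, B i) = ∑ i ∈ s, A ⊗ₖ B i :=
  map_sum (kroneckerBilinear (R := R) A) B s

theorem sum_trace_single_mul_mul_trace_single_mul [Fintype n] [DecidableEq n]
    (A B : Matrix n n R) :
    ∑ a : n, ∑ b : n, (single a b (1 : R) * A).trace * (single a b 1 * B).trace =
      (Aᵀ * B).trace := by
  simp only [trace_single_mul, smul_eq_mul, one_mul]
  rfl

theorem sum_kronecker_eq_sum_trace_transpose_mul_smul [Fintype n] [DecidableEq n]
    [Fintype κ] [Fintype κ'] {f g : Matrix n n R → Matrix m m R}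
    {A : κ → Matrix n n R} {B : κ → Matrix m m R} {C : κ' → Matrix n n R}
    {D : κ' → Matrix m m R}
    (hf : ∀ X, f X = ∑ k, (X * A k).trace • B k) (hg : ∀ X, g X = ∑ k, (X * C k).trace • D k) :
    ∑ a : n, ∑ b : n, f (single a b 1) ⊗ₖ g (single a b 1) =
      ∑ k, ∑ k', ((A k)ᵀ * C k').trace • (B k ⊗ₖ D k') := by
  simp only [hf, hg, sum_kronecker, kronecker_sum, smul_kronecker, kronecker_smul,
    Finset.smul_sum, smul_smul, ← sum_trace_single_mul_mul_trace_single_mul, Finset.sum_smul,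
    ← Fintype.sum_prod_type']
  refine Fintype.sum_equiv
    ⟨fun x => (x.2.2.2, x.2.2.1, x.1, x.2.1), fun y => (y.2.2.1, y.2.2.2, y.2.1, y.1),
      fun _ => rfl, fun _ => rfl⟩ _ _ fun _ => ?_
  rw [mul_comm]
  rfl

end Kronecker

theorem posSemidef_sum_single_kronecker_single {R n : Type*} [CommRing R] [PartialOrder R]
    [StarRing R] [StarOrderedRing R] [Fintype n] [DecidableEq n] :
    (∑ a : n, ∑ b : n, single a b (1 : R) ⊗ₖ single a b 1).PosSemidef := by
  convert posSemidef_vecMulVec_self_star (fun p : n × n => if p.1 = p.2 then (1 : R) else 0)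
  ext ⟨p, q⟩ ⟨r, s⟩
  simp only [single_kronecker_single, sum_apply, single_apply, vecMulVec_apply, Prod.mk.injEq,
    Pi.star_apply, ite_and]
  by_cases hpq : p = q <;> by_cases hrs : r = s <;> simp [hpq, hrs, eq_comm]

end Matrix

theorem Phi_eq_sum_trace_mul_smul (n : ℕ) (J : Fin 3 → Matrix (Fin n) (Fin n) ℂ)
    (lam : Fin 3 → ℝ) (X : Matrix (Fin n) (Fin n) ℂ) :
    Phi n J lam X = ∑ k : Option (Fin 3), (X * k.elim 1 J).trace •
      k.elim (((1 / (n : ℝ) : ℝ) : ℂ) • 1)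
        (fun i => (((3 / (spinJ n * (spinJ n + 1) * n) : ℝ) : ℂ) * lam i) • J i) := by
  simp only [Phi, Fintype.sum_option, Option.elim, mul_one, Finset.smul_sum, smul_smul]
  congr 1
  · rw [mul_comm]
  · exact Finset.sum_congr rfl fun i _ => by congr 1; ring

theorem sum_Phi_single_kronecker_Phi_single (n : ℕ) (J : Fin 3 → Matrix (Fin n) (Fin n) ℂ)
    (lam : Fin 3 → ℝ) {τ : ℂ} {s : Fin 3 → ℂ} (htr : ∀ i, (J i).trace = 0)
    (horth : ∀ k l, (J k * J l).trace = if k = l then τ else 0)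
    (hT : ∀ i, (J i)ᵀ = s i • J i) :
    ∑ a, ∑ b, Phi n J lam (single a b 1) ⊗ₖ Phi n J lam (single a b 1) =
      ((n : ℂ) * ((1 / (n : ℝ) : ℝ) : ℂ) ^ 2) • (1 ⊗ₖ 1) +
        ∑ i, (s i * τ * (((3 / (spinJ n * (spinJ n + 1) * n) : ℝ) : ℂ) * lam i) ^ 2) •
          (J i ⊗ₖ J i) := by
  rw [sum_kronecker_eq_sum_trace_transpose_mul_smul (Phi_eq_sum_trace_mul_smul n J lam)
    (Phi_eq_sum_trace_mul_smul n J lam)]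
  simp only [Fintype.sum_option, Option.elim, transpose_one, one_mul, mul_one, trace_transpose,
    htr, hT, smul_mul_assoc, trace_smul, horth, smul_eq_mul, mul_ite, mul_zero, ite_mul, zero_mul,
    ite_smul, zero_smul, Finset.sum_ite_eq, Finset.mem_univ, if_true, Finset.sum_const_zero,
    add_zero, zero_add, smul_kronecker, kronecker_smul, smul_smul, trace_one, Fintype.card_fin]
  congr 1
  · rw [sq, mul_assoc]
  · exact Finset.sum_congr rfl fun i _ => by congr 1; ring

theorem spinJ_pos {n : ℕ} (hn : 2 ≤ n) : 0 < spinJ n := by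
  have : (2 : ℝ) ≤ n := by exact_mod_cast hn
  unfold spinJ
  linarith

theorem natCast_mul_sq_spin_coeff {n : ℕ} (hn : 2 ≤ n) :
    (n : ℝ) * (3 / (spinJ n * (spinJ n + 1) * n)) ^ 2 *
      (spinJ n * (spinJ n + 1) * (2 * spinJ n + 1) / 3) = 3 / (spinJ n * (spinJ n + 1)) := by
  have hj := spinJ_pos hn
  have hn' : (n : ℝ) = 2 * spinJ n + 1 := by unfold spinJ; ring
  rw [← hn']
  have : (0 : ℝ) < n := by linarith
  field_simp

theorem natCast_smul_sum_Phi_single_kronecker_Phi_single {n : ℕ} (hn : 2 ≤ n)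
    {J : Fin 3 → Matrix (Fin n) (Fin n) ℂ} (htr : ∀ i, (J i).trace = 0)
    (htr2 : ∀ k l, (J k * J l).trace =
      if k = l then ((spinJ n * (spinJ n + 1) * (2 * spinJ n + 1) / 3 : ℝ) : ℂ) else 0)
    (hT1 : (J 0)ᵀ = J 0) (hT2 : (J 1)ᵀ = -(J 1)) (hT3 : (J 2)ᵀ = J 2) (lam : Fin 3 → ℝ) :
    (n : ℂ) • ∑ a, ∑ b, Phi n J lam (single a b 1) ⊗ₖ Phi n J lam (single a b 1) =
      (1 : Matrix (Fin n) (Fin n) ℂ) ⊗ₖ (1 : Matrix (Fin n) (Fin n) ℂ) +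
        ((3 / (spinJ n * (spinJ n + 1)) : ℝ) : ℂ) •
          (((lam 0 ^ 2 : ℝ) : ℂ) • (J 0 ⊗ₖ J 0) - ((lam 1 ^ 2 : ℝ) : ℂ) • (J 1 ⊗ₖ J 1) +
            ((lam 2 ^ 2 : ℝ) : ℂ) • (J 2 ⊗ₖ J 2)) := by
  have hT : ∀ i, (J i)ᵀ = (![1, -1, 1] : Fin 3 → ℂ) i • J i := by
    intro i
    fin_cases i <;> simp [hT1, hT2, hT3]
  have hn0 : (n : ℂ) ≠ 0 := Nat.cast_ne_zero.mpr (by omega)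
  have hid : (n : ℂ) * (n * ((1 / (n : ℝ) : ℝ) : ℂ) ^ 2) = 1 := by
    push_cast; field_simp
  have hcoeff : (n : ℂ) * ((3 / (spinJ n * (spinJ n + 1) * n) : ℝ) : ℂ) ^ 2 *
      ((spinJ n * (spinJ n + 1) * (2 * spinJ n + 1) / 3 : ℝ) : ℂ) =
        ((3 / (spinJ n * (spinJ n + 1)) : ℝ) : ℂ) := by
    exact_mod_cast natCast_mul_sq_spin_coeff hn
  rw [sum_Phi_single_kronecker_Phi_single n J lam htr htr2 hT, Fin.sum_univ_three]
  simp only [Matrix.cons_val_zero, Matrix.cons_val_one, Matrix.cons_val_two, Matrix.tail_cons,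
    Matrix.head_cons, Complex.ofReal_pow]
  linear_combination (norm := module) hid • (1 ⊗ₖ 1 : Matrix (Fin n × Fin n) (Fin n × Fin n) ℂ) +
    ((lam 0 : ℂ) ^ 2 * hcoeff) • (J 0 ⊗ₖ J 0) - ((lam 1 : ℂ) ^ 2 * hcoeff) • (J 1 ⊗ₖ J 1) +
    ((lam 2 : ℂ) ^ 2 * hcoeff) • (J 2 ⊗ₖ J 2)

theorem two_tensor_stable_positive_implies_square_cp_general
    (n : ℕ) (hn : 2 ≤ n) (J : Fin 3 → Matrix (Fin n) (Fin n) ℂ)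
    (htr : ∀ i, (J i).trace = 0)
    (htr2 : ∀ k l, (J k * J l).trace =
      if k = l then ((spinJ n * (spinJ n + 1) * (2 * spinJ n + 1) / 3 : ℝ) : ℂ) else 0)
    (hT1 : (J 0)ᵀ = J 0) (hT2 : (J 1)ᵀ = -(J 1)) (hT3 : (J 2)ᵀ = J 2)
    (lam : Fin 3 → ℝ)
    (htsp : ∃ L : Matrix (Fin n × Fin n) (Fin n × Fin n) ℂ →ₗ[ℂ]
          Matrix (Fin n × Fin n) (Fin n × Fin n) ℂ,
      (∀ A B : Matrix (Fin n) (Fin n) ℂ, L (A ⊗ₖ B) = Phi n J lam A ⊗ₖ Phi n J lam B) ∧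
      (∀ R : Matrix (Fin n × Fin n) (Fin n × Fin n) ℂ, R.PosSemidef → (L R).PosSemidef)) :
    ((1 : Matrix (Fin n) (Fin n) ℂ) ⊗ₖ (1 : Matrix (Fin n) (Fin n) ℂ) +
      ((3 / (spinJ n * (spinJ n + 1)) : ℝ) : ℂ) •
        (((lam 0 ^ 2 : ℝ) : ℂ) • (J 0 ⊗ₖ J 0) - ((lam 1 ^ 2 : ℝ) : ℂ) • (J 1 ⊗ₖ J 1) +
          ((lam 2 ^ 2 : ℝ) : ℂ) • (J 2 ⊗ₖ J 2))).PosSemidef := by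
  obtain ⟨L, hL, hLpos⟩ := htsp
  have hLΩ : (∑ a, ∑ b, Phi n J lam (single a b 1) ⊗ₖ Phi n J lam (single a b 1)).PosSemidef := by
    simpa only [map_sum, hL] using hLpos _ posSemidef_sum_single_kronecker_single
  rw [← natCast_smul_sum_Phi_single_kronecker_Phi_single hn htr htr2 hT1 hT2 hT3 lam]
  exact hLΩ.smul (Nat.cast_nonneg n)

theorem two_tensor_stable_positive_implies_square_cp
    (n : ℕ) (hn : 2 ≤ n) (J : Fin 3 → Matrix (Fin n) (Fin n) ℂ)
    (hherm : ∀ i, (J i).IsHermitian)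
    (htr : ∀ i, (J i).trace = 0)
    (htr2 : ∀ k l, (J k * J l).trace =
      if k = l then ((spinJ n * (spinJ n + 1) * (2 * spinJ n + 1) / 3 : ℝ) : ℂ) else 0)
    (hT1 : (J 0)ᵀ = J 0) (hT2 : (J 1)ᵀ = -(J 1)) (hT3 : (J 2)ᵀ = J 2)
    (lam : Fin 3 → ℝ)
    (htsp : ∃ L : Matrix (Fin n × Fin n) (Fin n × Fin n) ℂ →ₗ[ℂ]
          Matrix (Fin n × Fin n) (Fin n × Fin n) ℂ,
      (∀ A B : Matrix (Fin n) (Fin n) ℂ, L (A ⊗ₖ B) = Phi n J lam A ⊗ₖ Phi n J lam B) ∧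
      (∀ R : Matrix (Fin n × Fin n) (Fin n × Fin n) ℂ, R.PosSemidef → (L R).PosSemidef)) :
    ((1 : Matrix (Fin n) (Fin n) ℂ) ⊗ₖ (1 : Matrix (Fin n) (Fin n) ℂ) +
      ((3 / (spinJ n * (spinJ n + 1)) : ℝ) : ℂ) •
        (((lam 0 ^ 2 : ℝ) : ℂ) • (J 0 ⊗ₖ J 0) - ((lam 1 ^ 2 : ℝ) : ℂ) • (J 1 ⊗ₖ J 1) +
          ((lam 2 ^ 2 : ℝ) : ℂ) • (J 2 ⊗ₖ J 2))).PosSemidef :=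
  two_tensor_stable_positive_implies_square_cp_general n hn J htr htr2 hT1 hT2 hT3 lam htsp
end
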